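/- arXiv:1110.3078 — 2 statements merged into one kernel-verified Lean document; each statement's English description precedes it below -/
import Mathlib

section
/- Let a : ℕ → ℕ satisfy a(1)=1 and a(d) = (2d-1)!! − ∑_{k=1}^{d-1}(2d-2k-1)!!·a(k) for d ≥ 2. Then for all d ≥ 4, a(d) < (2d-3)·(2d-3)!!. -/
/-!
Write `D n = oddDF n = (2n-1)!!`. Since the subtracted sum is at most `(2n-1) D(n-1) = D n`, the
recurrence says exactly `∑_{k=1}^{n} D(n-k) a(k) = D n`: the relation between all perfect matchings
and the indecomposable ones. In particular `a k ≤ D k`, and since `D` is log-convex,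
`D i D j ≤ D 3 D (i+j-3)` for `i, j ≥ 3`, so the convolution `∑_{k=1}^{n-1} D(n-k) a(k)` is at most
`2 D(n-1) + 14 D(n-2)`, i.e. `a n ≥ D n - 2 D(n-1) - 14 D(n-2)`.
Conversely, inserting this lower bound for `a(n-1)` and `a(n-2)` into the terms `k = 1, 2, n-2, n-1`
of the identity shows that the convolution exceeds `2 D(n-1)` once `n ≥ 7`, which is the claim
`a n < D n - 2 D(n-1) = (2n-3) D(n-1)`; the cases `n = 4, 5, 6` are `a = 74, 706, 8162`.
-/

/-- The double factorial `(2d-1)!! = ∏_{i=1}^d (2i-1)`, with `(-1)!! = oddDF 0 = 1`. -/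
def oddDF (d : ℕ) : ℕ := ∏ i ∈ Finset.range d, (2 * i + 1)

open Finset

theorem oddDF_succ (n : ℕ) : oddDF (n + 1) = (2 * n + 1) * oddDF n := by
  rw [oddDF, prod_range_succ, mul_comm]; rfl

theorem oddDF_pos (n : ℕ) : 0 < oddDF n := prod_pos fun _ _ => by positivity

theorem oddDF_add_mul_le {k j : ℕ} (h : k ≤ j) (m : ℕ) :
    oddDF (k + m) * oddDF j ≤ oddDF k * oddDF (j + m) := by
  induction m with
  | zero => rfl
  | succ m ih =>
    rw [← add_assoc, ← add_assoc, oddDF_succ, oddDF_succ]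
    calc (2 * (k + m) + 1) * oddDF (k + m) * oddDF j
        = (2 * (k + m) + 1) * (oddDF (k + m) * oddDF j) := by ring
      _ ≤ (2 * (j + m) + 1) * (oddDF k * oddDF (j + m)) := by gcongr
      _ = oddDF k * ((2 * (j + m) + 1) * oddDF (j + m)) := by ring

theorem oddDF_mul_oddDF_le {k i j : ℕ} (hi : k ≤ i) (hj : k ≤ j) :
    oddDF i * oddDF j ≤ oddDF k * oddDF (i + j - k) := by
  obtain ⟨m, rfl⟩ := Nat.exists_eq_add_of_le hi
  simpa [add_comm j, add_assoc] using oddDF_add_mul_le hj m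

theorem sum_oddDF_sub_mul_oddDF_le {n : ℕ} (hn : 5 ≤ n) :
    ∑ k ∈ Icc 1 (n - 1), oddDF (n - k) * oddDF k ≤ 2 * oddDF (n - 1) + 14 * oddDF (n - 2) := by
  obtain ⟨m, rfl⟩ := Nat.exists_eq_add_of_le' hn
  simp only [show m + 5 - 1 = m + 4 by omega, show m + 5 - 2 = m + 3 by omega]
  have hsplit : Icc 1 (m + 4) = {1, 2, m + 3, m + 4} ∪ Icc 3 (m + 2) := by
    ext k; simp only [mem_union, mem_insert, mem_singleton, mem_Icc]; omega
  have hdisj : Disjoint ({1, 2, m + 3, m + 4} : Finset ℕ) (Icc 3 (m + 2)) := by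
    simp only [disjoint_left, mem_insert, mem_singleton, mem_Icc]; omega
  have hends : ∑ k ∈ {1, 2, m + 3, m + 4}, oddDF (m + 5 - k) * oddDF k
      = 2 * oddDF (m + 4) + 6 * oddDF (m + 3) := by
    rw [sum_insert (by simp), sum_insert (by simp), sum_insert (by simp), sum_singleton]
    simp only [show m + 5 - 1 = m + 4 by omega, show m + 5 - 2 = m + 3 by omega,
      show m + 5 - (m + 3) = 2 by omega, show m + 5 - (m + 4) = 1 by omega,
      show oddDF 1 = 1 from rfl, show oddDF 2 = 3 from rfl]
    ring
  have hmiddle : ∑ k ∈ Icc 3 (m + 2), oddDF (m + 5 - k) * oddDF k ≤ m * (15 * oddDF (m + 2)) := by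
    have hterm : ∀ k ∈ Icc 3 (m + 2), oddDF (m + 5 - k) * oddDF k ≤ 15 * oddDF (m + 2) := by
      intro k hk
      rw [mem_Icc] at hk
      calc oddDF (m + 5 - k) * oddDF k ≤ oddDF 3 * oddDF (m + 5 - k + k - 3) :=
            oddDF_mul_oddDF_le (by omega) hk.1
        _ = 15 * oddDF (m + 2) := by rw [show m + 5 - k + k - 3 = m + 2 by omega]; rfl
    simpa using sum_le_card_nsmul _ _ _ hterm
  rw [hsplit, sum_union hdisj, hends]
  have hm : m * 15 ≤ 8 * (2 * m + 5) := by omega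
  have hsucc : oddDF (m + 3) = (2 * m + 5) * oddDF (m + 2) := oddDF_succ _
  nlinarith [oddDF_pos (m + 2)]

theorem sum_Icc_oddDF_sub_mul_eq_sum_add {n : ℕ} (hn : 1 ≤ n) (f : ℕ → ℕ) :
    ∑ k ∈ Icc 1 n, oddDF (n - k) * f k = ∑ k ∈ Icc 1 (n - 1), oddDF (n - k) * f k + f n := by
  obtain ⟨m, rfl⟩ := Nat.exists_eq_add_of_le' hn
  rw [sum_Icc_succ_top (by omega), Nat.add_sub_cancel, Nat.sub_self, oddDF, prod_range_zero,
    one_mul]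

def IsOddDFIndecomposable (a : ℕ → ℕ) : Prop :=
  ∀ n, 1 ≤ n → ∑ k ∈ Icc 1 n, oddDF (n - k) * a k = oddDF n

theorem isOddDFIndecomposable_of_rec {a : ℕ → ℕ} (h1 : a 1 = 1)
    (hrec : ∀ d, 2 ≤ d → a d = oddDF d - ∑ k ∈ Icc 1 (d - 1), oddDF (d - k) * a k) :
    IsOddDFIndecomposable a := by
  intro n hn
  induction n, hn using Nat.le_induction with
  | base => simp [h1, oddDF]
  | succ n hn ih =>
    have hbound : ∑ k ∈ Icc 1 n, oddDF (n + 1 - k) * a k ≤ oddDF (n + 1) :=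
      calc ∑ k ∈ Icc 1 n, oddDF (n + 1 - k) * a k
          ≤ ∑ k ∈ Icc 1 n, (2 * n + 1) * (oddDF (n - k) * a k) := by
            refine sum_le_sum fun k hk => ?_
            rw [mem_Icc] at hk
            rw [show n + 1 - k = n - k + 1 by omega, oddDF_succ, mul_assoc]
            gcongr
            omega
        _ = oddDF (n + 1) := by rw [← mul_sum, ih, oddDF_succ]
    have hrec' := hrec (n + 1) (by omega)
    rw [Nat.add_sub_cancel] at hrec'
    rw [sum_Icc_oddDF_sub_mul_eq_sum_add (by omega), Nat.add_sub_cancel, hrec',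
      Nat.add_sub_cancel' hbound]

namespace IsOddDFIndecomposable

variable {a : ℕ → ℕ}

theorem small_values (ha : IsOddDFIndecomposable a) :
    a 1 = 1 ∧ a 2 = 2 ∧ a 4 = 74 ∧ a 5 = 706 ∧ a 6 = 8162 := by
  have h1 := ha 1 le_rfl
  have h2 := ha 2 (by norm_num)
  have h3 := ha 3 (by norm_num)
  have h4 := ha 4 (by norm_num)
  have h5 := ha 5 (by norm_num)
  have h6 := ha 6 (by norm_num)
  simp only [Icc_self, oddDF, sum_singleton, tsub_self, range_zero, prod_empty, one_mul,
    range_one, prod_singleton, mul_zero, zero_add, Nat.reduceAdd, Nat.one_le_ofNat,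
    sum_Icc_succ_top, Nat.add_one_sub_one, prod_range_succ, mul_one, Nat.reduceSub,
    Nat.reduceMul] at h1 h2 h3 h4 h5 h6
  omega

theorem le_oddDF (ha : IsOddDFIndecomposable a) {n : ℕ} (hn : 1 ≤ n) : a n ≤ oddDF n := by
  rw [← ha n hn, sum_Icc_oddDF_sub_mul_eq_sum_add hn]
  exact Nat.le_add_left _ _

theorem oddDF_le_add (ha : IsOddDFIndecomposable a) {n : ℕ} (hn : 5 ≤ n) :
    oddDF n ≤ a n + (2 * oddDF (n - 1) + 14 * oddDF (n - 2)) :=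
  calc oddDF n = ∑ k ∈ Icc 1 (n - 1), oddDF (n - k) * a k + a n := by
        rw [← ha n (by omega), sum_Icc_oddDF_sub_mul_eq_sum_add (by omega)]
    _ ≤ ∑ k ∈ Icc 1 (n - 1), oddDF (n - k) * oddDF k + a n := by
        gcongr with k hk
        exact ha.le_oddDF (mem_Icc.1 hk).1
    _ ≤ a n + (2 * oddDF (n - 1) + 14 * oddDF (n - 2)) := by
        rw [add_comm]
        gcongr
        exact sum_oddDF_sub_mul_oddDF_le hn

theorem lt_mul_oddDF (ha : IsOddDFIndecomposable a) {n : ℕ} (hn : 7 ≤ n) :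
    a n < (2 * n - 3) * oddDF (n - 1) := by
  obtain ⟨m, rfl⟩ := Nat.exists_eq_add_of_le' hn
  obtain ⟨ha1, ha2, -⟩ := ha.small_values
  have hpart : oddDF (m + 6) + 2 * oddDF (m + 5) + 3 * a (m + 5) + a (m + 6) + a (m + 7)
      ≤ oddDF (m + 7) := by
    rw [← ha (m + 7) (by omega)]
    calc _ = ∑ k ∈ {1, 2, m + 5, m + 6, m + 7}, oddDF (m + 7 - k) * a k := by
          rw [sum_insert (by simp), sum_insert (by simp), sum_insert (by simp),
            sum_insert (by simp), sum_singleton]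
          simp only [show m + 7 - 1 = m + 6 by omega, show m + 7 - 2 = m + 5 by omega,
            show m + 7 - (m + 5) = 2 by omega, show m + 7 - (m + 6) = 1 by omega, Nat.sub_self,
            ha1, ha2, show oddDF 0 = 1 from rfl, show oddDF 1 = 1 from rfl,
            show oddDF 2 = 3 from rfl]
          ring
      _ ≤ _ := sum_le_sum_of_subset fun k => by
          simp only [mem_insert, mem_singleton, mem_Icc]; omega
  have hL6 := ha.oddDF_le_add (n := m + 6) (by omega)
  have hL5 := ha.oddDF_le_add (n := m + 5) (by omega)
  simp only [show m + 6 - 1 = m + 5 by omega, show m + 6 - 2 = m + 4 by omega,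
    show m + 5 - 1 = m + 4 by omega, show m + 5 - 2 = m + 3 by omega] at hL6 hL5
  simp only [show 2 * (m + 7) - 3 = 2 * m + 11 by omega, show m + 7 - 1 = m + 6 by omega]
  have hgrowth : 20 * oddDF (m + 4) + 42 * oddDF (m + 3) < 3 * oddDF (m + 5) := by
    rw [oddDF_succ (m + 4), oddDF_succ (m + 3)]
    calc 20 * ((2 * (m + 3) + 1) * oddDF (m + 3)) + 42 * oddDF (m + 3)
        = (40 * m + 182) * oddDF (m + 3) := by ring
      _ < (3 * ((2 * (m + 4) + 1) * (2 * (m + 3) + 1))) * oddDF (m + 3) :=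
          Nat.mul_lt_mul_of_pos_right (by nlinarith) (oddDF_pos _)
      _ = _ := by ring
  rw [oddDF_succ (m + 6)] at hpart
  linarith

end IsOddDFIndecomposable

/-- If `a(1)=1` and `a(d) = (2d-1)!! − ∑_{k=1}^{d-1} (2d-2k-1)!!·a(k)` for `d ≥ 2`,
then `a(d) < (2d-3)·(2d-3)!!` for all `d ≥ 4`. -/
theorem a_upper_bound (a : ℕ → ℕ) (h1 : a 1 = 1)
    (hrec : ∀ d, 2 ≤ d → a d = oddDF d - ∑ k ∈ Finset.Icc 1 (d - 1), oddDF (d - k) * a k) :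
    ∀ d, 4 ≤ d → a d < (2 * d - 3) * oddDF (d - 1) := by
  have ha := isOddDFIndecomposable_of_rec h1 hrec
  obtain ⟨-, -, ha4, ha5, ha6⟩ := ha.small_values
  intro d hd
  obtain hd | hd := lt_or_ge d 7
  · interval_cases d <;> simp [ha4, ha5, ha6, oddDF, prod_range_succ]
  · exact ha.lt_mul_oddDF hd
end

section
/- Let a satisfy a(1)=1, a(d) = (2d-1)!! − ∑_{k=1}^{d-1}(2d-2k-1)!!·a(k) for d ≥ 2, and let b(d) = ((2d-3)²+1)·(2d-5)!!. Then for all d ≥ 4, a(d)/b(d) < 1 − 1/((2d-3)²+1), i.e. a(d)·((2d-3)²+1) < b(d)·(2d-3)². -/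
open Finset

theorem oddDF_add_two (n : ℕ) :
    oddDF (n + 2) = (2 * n + 1) ^ 2 * oddDF n + 2 * oddDF (n + 1) := by
  rw [oddDF_succ (n + 1), oddDF_succ n]
  ring

theorem sum_antidiagonal_oddDF_succ (r m : ℕ) :
    ∑ p ∈ antidiagonal (m + 1), oddDF (p.1 + r) * oddDF (p.2 + r) =
      (m + 2 * r + 1) * ∑ p ∈ antidiagonal m, oddDF (p.1 + r) * oddDF (p.2 + r) +
        oddDF r * oddDF (m + 1 + r) := by
  -- Shifting either index of a term of the convolution at `m` multiplies it by `2 i + 2 r + 1`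
  -- or `2 j + 2 r + 1`, which add up to `2 (m + 2 r + 1)`.
  have hshift : ∀ p ∈ antidiagonal m,
      oddDF (p.1 + 1 + r) * oddDF (p.2 + r) + oddDF (p.1 + r) * oddDF (p.2 + 1 + r) =
        2 * ((m + 2 * r + 1) * (oddDF (p.1 + r) * oddDF (p.2 + r))) := by
    intro p hp
    rw [HasAntidiagonal.mem_antidiagonal] at hp
    rw [add_right_comm p.1, add_right_comm p.2, oddDF_succ, oddDF_succ, ← hp]
    ring
  have hsucc :=
    Nat.sum_antidiagonal_succ (n := m) (f := fun p ↦ oddDF (p.1 + r) * oddDF (p.2 + r))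
  have hsucc' :=
    Nat.sum_antidiagonal_succ' (n := m) (f := fun p ↦ oddDF (p.1 + r) * oddDF (p.2 + r))
  have htotal := sum_congr rfl hshift
  rw [sum_add_distrib, ← mul_sum, ← mul_sum] at htotal
  simp only [zero_add] at hsucc hsucc'
  rw [mul_comm (oddDF (m + 1 + r))] at hsucc'
  omega

theorem sum_antidiagonal_oddDF_le (m : ℕ) :
    ∑ p ∈ antidiagonal m, oddDF (p.1 + 3) * oddDF (p.2 + 3) ≤ 5 * oddDF (m + 4) := by
  induction m with
  | zero => decide
  | succ m ih =>
    rw [sum_antidiagonal_oddDF_succ, show m + 1 + 4 = m + 4 + 1 from rfl, oddDF_succ (m + 4)]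
    rcases m with _ | m
    · decide
    · have : oddDF 3 = 15 := rfl
      nlinarith

theorem sum_Icc_one_split_ends {M : Type*} [AddCommMonoid M] (f : ℕ → M) (m : ℕ) :
    ∑ k ∈ Icc 1 (m + 5), f k =
      f 1 + f 2 + ∑ k ∈ range (m + 1), f (k + 3) + f (m + 4) + f (m + 5) := by
  rw [← Ico_add_one_right_eq_Icc, sum_Ico_eq_sum_range, Nat.add_sub_cancel, sum_range_succ,
    sum_range_succ, sum_range_succ', sum_range_succ', show 1 + (m + 3) = m + 4 by omega,
    show 1 + (m + 4) = m + 5 by omega]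
  simp only [show ∀ k, 1 + (k + 1 + 1) = k + 3 by omega]
  abel

/-- Unless the natural-number subtraction truncates, this says
`∑_{k=1}^{d} (2d-2k-1)!! a k = (2d-1)!!` for `d ≥ 1`. -/
def SolvesOddDFRecurrence (a : ℕ → ℕ) : Prop :=
  a 1 = 1 ∧ ∀ d, 2 ≤ d → a d = oddDF d - ∑ k ∈ Icc 1 (d - 1), oddDF (d - k) * a k

namespace SolvesOddDFRecurrence

variable {a : ℕ → ℕ}

theorem small_values (ha : SolvesOddDFRecurrence a) :
    a 2 = 2 ∧ a 3 = 10 ∧ a 4 = 74 ∧ a 5 = 706 := by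
  have h2 : a 2 = 2 := by
    rw [ha.2 2 le_rfl]; simp [ha.1, oddDF, prod_range_succ]
  have h3 : a 3 = 10 := by
    rw [ha.2 3 (by norm_num)]; simp [sum_Icc_succ_top, ha.1, h2, oddDF, prod_range_succ]
  have h4 : a 4 = 74 := by
    rw [ha.2 4 (by norm_num)]; simp [sum_Icc_succ_top, ha.1, h2, h3, oddDF, prod_range_succ]
  have h5 : a 5 = 706 := by
    rw [ha.2 5 (by norm_num)]; simp [sum_Icc_succ_top, ha.1, h2, h3, h4, oddDF, prod_range_succ]
  exact ⟨h2, h3, h4, h5⟩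

theorem le_oddDF (ha : SolvesOddDFRecurrence a) {k : ℕ} (hk : 1 ≤ k) : a k ≤ oddDF k := by
  rcases hk.eq_or_lt with rfl | hk
  · rw [ha.1]; rfl
  · rw [ha.2 k hk]; exact Nat.sub_le _ _

theorem convolution_split (ha : SolvesOddDFRecurrence a) (m : ℕ) :
    ∑ k ∈ Icc 1 (m + 5), oddDF (m + 6 - k) * a k =
      oddDF (m + 5) + 2 * oddDF (m + 4) + ∑ k ∈ range (m + 1), oddDF (m - k + 3) * a (k + 3) +
        3 * a (m + 4) + a (m + 5) := by
  obtain ⟨h2, -⟩ := ha.small_values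
  rw [sum_Icc_one_split_ends, ha.1, h2, sum_congr rfl fun k hk ↦ by
    rw [show m + 6 - (k + 3) = m - k + 3 by have := mem_range.1 hk; omega]]
  simp [show m + 6 - (m + 4) = 2 by omega, show m + 6 - (m + 5) = 1 by omega, oddDF,
    prod_range_succ, mul_comm]

theorem middle_convolution_le (ha : SolvesOddDFRecurrence a) (m : ℕ) :
    ∑ k ∈ range (m + 1), oddDF (m - k + 3) * a (k + 3) ≤ 5 * oddDF (m + 4) :=
  calc ∑ k ∈ range (m + 1), oddDF (m - k + 3) * a (k + 3)
      ≤ ∑ k ∈ range (m + 1), oddDF (k + 3) * oddDF (m - k + 3) :=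
        sum_le_sum fun k _ ↦ by rw [mul_comm]; exact Nat.mul_le_mul_right _ (ha.le_oddDF (by omega))
    _ = ∑ p ∈ antidiagonal m, oddDF (p.1 + 3) * oddDF (p.2 + 3) :=
        (Nat.sum_antidiagonal_eq_sum_range_succ (fun i j ↦ oddDF (i + 3) * oddDF (j + 3)) m).symm
    _ ≤ 5 * oddDF (m + 4) := sum_antidiagonal_oddDF_le m

theorem bounds_step (ha : SolvesOddDFRecurrence a) (m : ℕ)
    (h4 : a (m + 4) < (2 * m + 5) ^ 2 * oddDF (m + 2) ∧
      (2 * m + 5) ^ 2 * oddDF (m + 2) ≤ a (m + 4) + 10 * oddDF (m + 2))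
    (h5 : a (m + 5) < (2 * m + 7) ^ 2 * oddDF (m + 3) ∧
      (2 * m + 7) ^ 2 * oddDF (m + 3) ≤ a (m + 5) + 10 * oddDF (m + 3)) :
    a (m + 6) < (2 * m + 9) ^ 2 * oddDF (m + 4) ∧
      (2 * m + 9) ^ 2 * oddDF (m + 4) ≤ a (m + 6) + 10 * oddDF (m + 4) := by
  obtain ⟨-, h3, -, -⟩ := ha.small_values
  have ha6 := ha.2 (m + 6) (by omega)
  rw [show m + 6 - 1 = m + 5 from rfl, convolution_split ha] at ha6
  have hM_le := ha.middle_convolution_le m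
  have hM_ge : oddDF (m + 3) * a 3 ≤ ∑ k ∈ range (m + 1), oddDF (m - k + 3) * a (k + 3) :=
    single_le_sum (f := fun k ↦ oddDF (m - k + 3) * a (k + 3)) (fun _ _ ↦ Nat.zero_le _)
      (mem_range.2 m.succ_pos)
  have e4 : oddDF (m + 4) = (2 * m + 5) ^ 2 * oddDF (m + 2) + 2 * oddDF (m + 3) :=
    oddDF_add_two (m + 2)
  have e5 : oddDF (m + 5) = (2 * m + 7) ^ 2 * oddDF (m + 3) + 2 * oddDF (m + 4) :=
    oddDF_add_two (m + 3)
  have e6 : oddDF (m + 6) = (2 * m + 9) ^ 2 * oddDF (m + 4) + 2 * oddDF (m + 5) :=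
    oddDF_add_two (m + 4)
  have hpos : 0 < (2 * m + 9) ^ 2 * oddDF (m + 4) := by have := oddDF_pos (m + 4); positivity
  have h11 : 11 * oddDF (m + 2) ≤ (2 * m + 5) ^ 2 * oddDF (m + 2) :=
    Nat.mul_le_mul_right _ <| (by norm_num : 11 ≤ 5 ^ 2).trans (Nat.pow_le_pow_left (by omega) 2)
  rw [h3] at hM_ge
  -- By `e4`, `e5`, `e6` the claim is `2 D(m+5) < T ≤ 2 D(m+5) + 10 D(m+4)` for the convolution `T`
  -- in `ha6`, which is linear in the products appearing here.
  omega

theorem bounds (ha : SolvesOddDFRecurrence a) (m : ℕ) :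
    a (m + 4) < (2 * m + 5) ^ 2 * oddDF (m + 2) ∧
      (2 * m + 5) ^ 2 * oddDF (m + 2) ≤ a (m + 4) + 10 * oddDF (m + 2) := by
  induction m using Nat.twoStepInduction with
  | zero => rw [ha.small_values.2.2.1]; decide
  | one => rw [ha.small_values.2.2.2]; decide
  | more m ih ih' => exact ha.bounds_step m ih ih'

end SolvesOddDFRecurrence

/-- If `a(1)=1`, `a(d) = (2d-1)!! − ∑_{k=1}^{d-1}(2d-2k-1)!!·a(k)` for `d ≥ 2`, and
`b(d) = ((2d-3)²+1)·(2d-5)!!`, then for all `d ≥ 4`,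
`a(d)/b(d) < 1 − 1/((2d-3)²+1)`, i.e. `a(d)·((2d-3)²+1) < b(d)·(2d-3)²`. -/
theorem a_div_b_bound (a b : ℕ → ℕ) (h1 : a 1 = 1)
    (hrec : ∀ d, 2 ≤ d → a d = oddDF d - ∑ k ∈ Finset.Icc 1 (d - 1), oddDF (d - k) * a k)
    (hb : ∀ d, b d = ((2 * d - 3) ^ 2 + 1) * oddDF (d - 2)) :
    ∀ d, 4 ≤ d → a d * ((2 * d - 3) ^ 2 + 1) < b d * (2 * d - 3) ^ 2 := by
  intro d hd
  obtain ⟨m, rfl⟩ : ∃ m, d = m + 4 := ⟨d - 4, by omega⟩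
  have hlt := (SolvesOddDFRecurrence.bounds ⟨h1, hrec⟩ m).1
  rw [hb, show 2 * (m + 4) - 3 = 2 * m + 5 by omega, show m + 4 - 2 = m + 2 from rfl]
  calc a (m + 4) * ((2 * m + 5) ^ 2 + 1)
      < (2 * m + 5) ^ 2 * oddDF (m + 2) * ((2 * m + 5) ^ 2 + 1) :=
        Nat.mul_lt_mul_of_pos_right hlt (Nat.succ_pos _)
    _ = ((2 * m + 5) ^ 2 + 1) * oddDF (m + 2) * (2 * m + 5) ^ 2 := by ring
end
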